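/- arXiv:1908.04849 — 7 statements merged into one kernel-verified Lean document; each statement's English description precedes it below -/
import Mathlib

section
/- Let V be a finite set, let Δ > 0 and σ ≥ 0 be real numbers, let C ⊆ V be nonempty, and let s, s' : V → ℝ be functions with s(v) ≥ 0, s'(v) ≥ 0 and |s(v) − s'(v)| ≤ Δ for every v ∈ V. Let u₁, …, u_K be pairwise distinct elements of C with K ≤ |C|, and define P_s = ∏_{k=1}^{K} (s(u_k)+Δ+1)^σ / (∑_{w ∈ C∖{u₁,…,u_{k−1}}} (s(w)+Δ+1)^σ), and P_{s'} analogously with s replaced by s'. Then |log(P_s / P_{s'})| ≤ 2Kσ·log(1+Δ). -/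
/-!
Shifting every score by `Δ + 1` makes the weights comparable multiplicatively: if
`|x - y| ≤ Δ` and `y ≥ 0` then `x + Δ + 1 ≤ (1 + Δ) (y + Δ + 1)`. So every weight, and every
normalising sum of weights, changes by a factor in `[(1 + Δ)^{-σ}, (1 + Δ)^σ]` when `s` is
replaced by `s'`; the `k`-th normalising sum is positive because it still contains the term of
`u_k`. Each of the `K` factors of `P_s / P_{s'}` is the quotient of two such changes, so its
logarithm is at most `2σ log(1 + Δ)` in absolute value.
-/

open Finset Real

lemma abs_log_sub_log_le_log_of_le_mul {a b c : ℝ} (ha : 0 < a) (hb : 0 < b)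
    (hab : a ≤ c * b) (hba : b ≤ c * a) : |log a - log b| ≤ log c := by
  have hc : 0 < c := pos_of_mul_pos_left (ha.trans_le hab) hb.le
  have hab' := log_le_log ha hab
  have hba' := log_le_log hb hba
  rw [log_mul hc.ne' hb.ne'] at hab'
  rw [log_mul hc.ne' ha.ne'] at hba'
  exact abs_sub_le_iff.2 ⟨by linarith, by linarith⟩

lemma abs_log_sum_sub_log_sum_le_log {ι : Type*} {t : Finset ι} (ht : t.Nonempty)
    {f g : ι → ℝ} {c : ℝ} (hf : ∀ i ∈ t, 0 < f i) (hg : ∀ i ∈ t, 0 < g i)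
    (hfg : ∀ i ∈ t, f i ≤ c * g i) (hgf : ∀ i ∈ t, g i ≤ c * f i) :
    |log (∑ i ∈ t, f i) - log (∑ i ∈ t, g i)| ≤ log c :=
  abs_log_sub_log_le_log_of_le_mul (sum_pos hf ht) (sum_pos hg ht)
    (mul_sum t g c ▸ sum_le_sum hfg) (mul_sum t f c ▸ sum_le_sum hgf)

lemma abs_log_prod_div_div_prod_div_le {ι : Type*} (t : Finset ι) {a a' b b' : ι → ℝ} {L : ℝ}
    (ha : ∀ i ∈ t, 0 < a i) (ha' : ∀ i ∈ t, 0 < a' i)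
    (hb : ∀ i ∈ t, 0 < b i) (hb' : ∀ i ∈ t, 0 < b' i)
    (haa' : ∀ i ∈ t, |log (a i) - log (a' i)| ≤ L)
    (hbb' : ∀ i ∈ t, |log (b i) - log (b' i)| ≤ L) :
    |log ((∏ i ∈ t, a i / b i) / ∏ i ∈ t, a' i / b' i)| ≤ 2 * t.card * L := by
  have hq : ∀ i ∈ t, 0 < a i / b i := fun i hi => div_pos (ha i hi) (hb i hi)
  have hq' : ∀ i ∈ t, 0 < a' i / b' i := fun i hi => div_pos (ha' i hi) (hb' i hi)
  have hlog : log ((∏ i ∈ t, a i / b i) / ∏ i ∈ t, a' i / b' i) =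
      ∑ i ∈ t, ((log (a i) - log (a' i)) - (log (b i) - log (b' i))) := by
    rw [log_div (prod_pos hq).ne' (prod_pos hq').ne', log_prod (fun i hi => (hq i hi).ne'),
      log_prod (fun i hi => (hq' i hi).ne'), ← sum_sub_distrib]
    refine sum_congr rfl fun i hi => ?_
    rw [log_div (ha i hi).ne' (hb i hi).ne', log_div (ha' i hi).ne' (hb' i hi).ne']
    ring
  calc |log ((∏ i ∈ t, a i / b i) / ∏ i ∈ t, a' i / b' i)|
      ≤ ∑ i ∈ t, |(log (a i) - log (a' i)) - (log (b i) - log (b' i))| :=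
        hlog ▸ abs_sum_le_sum_abs _ _
    _ ≤ ∑ _i ∈ t, 2 * L := sum_le_sum fun i hi =>
        (abs_sub _ _).trans (by linarith [haa' i hi, hbb' i hi])
    _ = 2 * t.card * L := by rw [sum_const, nsmul_eq_mul]; ring

section ShiftedWeight

variable {x y Δ σ : ℝ}

lemma add_add_one_le_one_add_mul (hy : 0 ≤ y) (hxy : |x - y| ≤ Δ) :
    x + Δ + 1 ≤ (1 + Δ) * (y + Δ + 1) := by
  have hΔ : 0 ≤ Δ := (abs_nonneg _).trans hxy
  nlinarith [le_of_abs_le hxy]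

lemma rpow_add_add_one_le_mul (hσ : 0 ≤ σ) (hx : 0 ≤ x) (hy : 0 ≤ y) (hxy : |x - y| ≤ Δ) :
    (x + Δ + 1) ^ σ ≤ (1 + Δ) ^ σ * (y + Δ + 1) ^ σ := by
  have hΔ : 0 ≤ Δ := (abs_nonneg _).trans hxy
  rw [← mul_rpow (by positivity) (by positivity)]
  exact rpow_le_rpow (by positivity) (add_add_one_le_one_add_mul hy hxy) hσ

end ShiftedWeight

theorem dplp_privacy_general {V : Type*} [DecidableEq V]
    (Δ σ : ℝ) (hΔ : 0 < Δ) (hσ : 0 ≤ σ)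
    (C : Finset V)
    (s s' : V → ℝ)
    (hs : ∀ v, 0 ≤ s v) (hs' : ∀ v, 0 ≤ s' v)
    (hsens : ∀ v, |s v - s' v| ≤ Δ)
    (K : ℕ) (u : Fin K → V) (hu : Function.Injective u)
    (huC : ∀ k, u k ∈ C) :
    |Real.log
        ((∏ k : Fin K, (s (u k) + Δ + 1) ^ σ /
            ∑ w ∈ C \ Finset.image u (Finset.univ.filter (fun j => j < k)),
              (s w + Δ + 1) ^ σ) /
         (∏ k : Fin K, (s' (u k) + Δ + 1) ^ σ /
            ∑ w ∈ C \ Finset.image u (Finset.univ.filter (fun j => j < k)),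
              (s' w + Δ + 1) ^ σ))|
      ≤ 2 * K * σ * Real.log (1 + Δ) := by
  have hpos : ∀ {r : V → ℝ}, (∀ v, 0 ≤ r v) → ∀ v, 0 < (r v + Δ + 1) ^ σ := fun hr v => by
    have := hr v; positivity
  have hle : ∀ {r r' : V → ℝ}, (∀ v, 0 ≤ r v) → (∀ v, 0 ≤ r' v) →
      (∀ v, |r v - r' v| ≤ Δ) → ∀ v, (r v + Δ + 1) ^ σ ≤ (1 + Δ) ^ σ * (r' v + Δ + 1) ^ σ :=
    fun hr hr' hrr' v => rpow_add_add_one_le_mul hσ (hr v) (hr' v) (hrr' v)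
  have hsens' : ∀ v, |s' v - s v| ≤ Δ := fun v => abs_sub_comm (s v) _ ▸ hsens v
  have hremaining : ∀ k, (C \ image u (univ.filter (fun j => j < k))).Nonempty := fun k =>
    ⟨u k, mem_sdiff.2 ⟨huC k, by simp [hu.eq_iff]⟩⟩
  have key := abs_log_prod_div_div_prod_div_le univ
    (fun k _ => hpos hs (u k)) (fun k _ => hpos hs' (u k))
    (fun k _ => sum_pos (fun w _ => hpos hs w) (hremaining k))
    (fun k _ => sum_pos (fun w _ => hpos hs' w) (hremaining k))
    (fun k _ => abs_log_sub_log_le_log_of_le_mul (hpos hs (u k)) (hpos hs' (u k))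
      (hle hs hs' hsens (u k)) (hle hs' hs hsens' (u k)))
    (fun k _ => abs_log_sum_sub_log_sum_le_log (hremaining k)
      (fun w _ => hpos hs w) (fun w _ => hpos hs' w)
      (fun w _ => hle hs hs' hsens w) (fun w _ => hle hs' hs hsens' w))
  rwa [card_univ, Fintype.card_fin, log_rpow (by linarith), ← mul_assoc] at key

/-- DPLP is `2Kσ·log(1+Δ)`-differentially private. -/
theorem dplp_privacy {V : Type*} [Fintype V] [DecidableEq V]
    (Δ σ : ℝ) (hΔ : 0 < Δ) (hσ : 0 ≤ σ)
    (C : Finset V) (hC : C.Nonempty)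
    (s s' : V → ℝ)
    (hs : ∀ v, 0 ≤ s v) (hs' : ∀ v, 0 ≤ s' v)
    (hsens : ∀ v, |s v - s' v| ≤ Δ)
    (K : ℕ) (u : Fin K → V) (hu : Function.Injective u)
    (huC : ∀ k, u k ∈ C) (hK : K ≤ C.card) :
    |Real.log
        ((∏ k : Fin K, (s (u k) + Δ + 1) ^ σ /
            ∑ w ∈ C \ Finset.image u (Finset.univ.filter (fun j => j < k)),
              (s w + Δ + 1) ^ σ) /
         (∏ k : Fin K, (s' (u k) + Δ + 1) ^ σ /
            ∑ w ∈ C \ Finset.image u (Finset.univ.filter (fun j => j < k)),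
              (s' w + Δ + 1) ^ σ))|
      ≤ 2 * K * σ * Real.log (1 + Δ) :=
  dplp_privacy_general Δ σ hΔ hσ C s s' hs hs' hsens K u hu huC
end

section
/- Let V be a finite set, let σ ≥ 0 be a real number, let C ⊆ V be nonempty, and let s, s' : V → ℝ be nonnegative functions that agree at every node of V except possibly at one node v₀, where |s(v₀) − s'(v₀)| ≤ 1. Let u₁, …, u_K be pairwise distinct elements of C with K ≤ |C|, and define P_s = ∏_{k=1}^{K} (s(u_k)+2)^σ / (∑_{w ∈ C∖{u₁,…,u_{k−1}}} (s(w)+2)^σ), and P_{s'} analogously with s replaced by s'. Then |log(P_s / P_{s'})| ≤ Kσ·log 2. -/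
/-!
Each factor of `P_s` is a weight divided by a total weight. Since `s` and `s'` differ at one
node by at most `1`, after ordering them so that `s' ≤ s ≤ s' + 1` the weights satisfy
`w' ≤ w ≤ 2^σ w'` pointwise, hence so do the totals, and each factor of `P_s / P_{s'}` lies
in `[2^{-σ}, 2^σ]`. Summing the logarithms of the `K` factors gives `Kσ log 2`.
-/

open Finset Real

lemma abs_log_div_sub_log_div_le {a a' b b' c : ℝ} (ha : 0 < a) (hb : 0 < b)
    (haa' : a ≤ a') (ha'c : a' ≤ c * a) (hbb' : b ≤ b') (hb'c : b' ≤ c * b) :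
    |log (a' / b') - log (a / b)| ≤ log c := by
  have hc : 0 < c := pos_of_mul_pos_left (ha.trans_le (haa'.trans ha'c)) ha.le
  have ha' : 0 < a' := ha.trans_le haa'
  have hb' : 0 < b' := hb.trans_le hbb'
  have h₁ := log_le_log ha haa'
  have h₂ := log_le_log ha' ha'c
  have h₃ := log_le_log hb hbb'
  have h₄ := log_le_log hb' hb'c
  rw [log_mul hc.ne' ha.ne'] at h₂
  rw [log_mul hc.ne' hb.ne'] at h₄
  rw [log_div ha'.ne' hb'.ne', log_div ha.ne' hb.ne', abs_le]
  constructor <;> linarith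

lemma abs_log_div_sum_sub_log_div_sum_le {ι : Type*} {t : Finset ι} {x : ι} (hx : x ∈ t)
    {f g : ι → ℝ} {c : ℝ} (hf : ∀ i ∈ t, 0 < f i) (hfg : ∀ i ∈ t, f i ≤ g i)
    (hgc : ∀ i ∈ t, g i ≤ c * f i) :
    |log (g x / ∑ i ∈ t, g i) - log (f x / ∑ i ∈ t, f i)| ≤ log c :=
  abs_log_div_sub_log_div_le (hf x hx) (sum_pos hf ⟨x, hx⟩) (hfg x hx) (hgc x hx)
    (sum_le_sum hfg) (mul_sum t f c ▸ sum_le_sum hgc)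

lemma abs_log_prod_div_prod_le {ι : Type*} (t : Finset ι) {p q : ι → ℝ}
    (hp : ∀ i ∈ t, p i ≠ 0) (hq : ∀ i ∈ t, q i ≠ 0) :
    |log ((∏ i ∈ t, p i) / ∏ i ∈ t, q i)| ≤ ∑ i ∈ t, |log (p i) - log (q i)| := by
  rw [log_div (prod_ne_zero_iff.mpr hp) (prod_ne_zero_iff.mpr hq), log_prod hp, log_prod hq,
    ← sum_sub_distrib]
  exact abs_sum_le_sum_abs _ _

lemma rpow_add_two_le_two_rpow_mul {x y σ : ℝ} (hσ : 0 ≤ σ) (hy : 0 ≤ y) (hyx : y ≤ x)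
    (hxy : x ≤ y + 1) : (y + 2) ^ σ ≤ (x + 2) ^ σ ∧ (x + 2) ^ σ ≤ 2 ^ σ * (y + 2) ^ σ := by
  refine ⟨rpow_le_rpow (by linarith) (by linarith) hσ, ?_⟩
  rw [← mul_rpow zero_le_two (by linarith)]
  exact rpow_le_rpow (by linarith) (by linarith) hσ

lemma le_and_le_add_one_of_eq_off {V : Type*} {s s' : V → ℝ} {v₀ : V}
    (hagree : ∀ v, v ≠ v₀ → s v = s' v) (hle : s' v₀ ≤ s v₀) (hle1 : s v₀ ≤ s' v₀ + 1) (v : V) :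
    s' v ≤ s v ∧ s v ≤ s' v + 1 := by
  rcases eq_or_ne v v₀ with rfl | hv
  · exact ⟨hle, hle1⟩
  · rw [hagree v hv]
    constructor <;> linarith

section DPLP

variable {V : Type*} [DecidableEq V] {K : ℕ}

def remaining (C : Finset V) (u : Fin K → V) (k : Fin K) : Finset V :=
  C \ image u (univ.filter fun j => j < k)

/-- The paper's `P_s`: the probability that DPLP with score `s` outputs the list `u`. -/
noncomputable def dplpProb (σ : ℝ) (C : Finset V) (s : V → ℝ) (u : Fin K → V) : ℝ :=
  ∏ k, (s (u k) + 2) ^ σ / ∑ w ∈ remaining C u k, (s w + 2) ^ σ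

lemma mem_remaining_self {C : Finset V} {u : Fin K → V} (hu : Function.Injective u)
    (huC : ∀ k, u k ∈ C) (k : Fin K) : u k ∈ remaining C u k := by
  simp only [remaining, mem_sdiff, mem_image, mem_filter, mem_univ, true_and]
  exact ⟨huC k, fun ⟨j, hjk, hj⟩ => hjk.ne (hu hj)⟩

lemma abs_log_dplpProb_div_le {σ : ℝ} (hσ : 0 ≤ σ) {C : Finset V} {s s' : V → ℝ}
    (hs' : ∀ v, 0 ≤ s' v) (hle : ∀ v, s' v ≤ s v) (hle1 : ∀ v, s v ≤ s' v + 1)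
    {u : Fin K → V} (hu : Function.Injective u) (huC : ∀ k, u k ∈ C) :
    |log (dplpProb σ C s u / dplpProb σ C s' u)| ≤ K * σ * log 2 := by
  have hweight (v : V) := rpow_add_two_le_two_rpow_mul hσ (hs' v) (hle v) (hle1 v)
  have hpos (t : V → ℝ) (ht : ∀ v, 0 ≤ t v) (v : V) : 0 < (t v + 2) ^ σ :=
    rpow_pos_of_pos (by linarith [ht v]) σ
  have hs (v : V) : 0 ≤ s v := (hs' v).trans (hle v)
  have hstep (t : V → ℝ) (ht : ∀ v, 0 ≤ t v) (k : Fin K) :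
      (t (u k) + 2) ^ σ / ∑ w ∈ remaining C u k, (t w + 2) ^ σ ≠ 0 :=
    (div_pos (hpos t ht _)
      (sum_pos (fun w _ => hpos t ht w) ⟨u k, mem_remaining_self hu huC k⟩)).ne'
  calc |log (dplpProb σ C s u / dplpProb σ C s' u)|
      ≤ ∑ k, |log ((s (u k) + 2) ^ σ / ∑ w ∈ remaining C u k, (s w + 2) ^ σ) -
          log ((s' (u k) + 2) ^ σ / ∑ w ∈ remaining C u k, (s' w + 2) ^ σ)| :=
        abs_log_prod_div_prod_le _ (fun k _ => hstep s hs k) (fun k _ => hstep s' hs' k)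
    _ ≤ ∑ _k : Fin K, log (2 ^ σ) := sum_le_sum fun k _ =>
        abs_log_div_sum_sub_log_div_sum_le (mem_remaining_self hu huC k)
          (fun w _ => hpos s' hs' w) (fun w _ => (hweight w).1) (fun w _ => (hweight w).2)
    _ = K * σ * log 2 := by
        rw [sum_const, card_univ, Fintype.card_fin, nsmul_eq_mul, log_rpow two_pos, mul_assoc]

end DPLP

theorem dplp_privacy_cn_jc_general {V : Type*} [DecidableEq V]
    (σ : ℝ) (hσ : 0 ≤ σ)
    (C : Finset V)
    (s s' : V → ℝ)
    (hs : ∀ v, 0 ≤ s v) (hs' : ∀ v, 0 ≤ s' v)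
    (v₀ : V) (hagree : ∀ v, v ≠ v₀ → s v = s' v) (hv₀ : |s v₀ - s' v₀| ≤ 1)
    (K : ℕ) (u : Fin K → V) (hu : Function.Injective u)
    (huC : ∀ k, u k ∈ C) :
    |Real.log
        ((∏ k : Fin K, (s (u k) + 2) ^ σ /
            ∑ w ∈ C \ Finset.image u (Finset.univ.filter (fun j => j < k)),
              (s w + 2) ^ σ) /
         (∏ k : Fin K, (s' (u k) + 2) ^ σ /
            ∑ w ∈ C \ Finset.image u (Finset.univ.filter (fun j => j < k)),
              (s' w + 2) ^ σ))|
      ≤ K * σ * Real.log 2 := by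
  change |log (dplpProb σ C s u / dplpProb σ C s' u)| ≤ K * σ * log 2
  obtain ⟨hlow, hupp⟩ := abs_le.mp hv₀
  rcases le_total (s' v₀) (s v₀) with h | h
  · have hbetween := le_and_le_add_one_of_eq_off hagree h (by linarith)
    exact abs_log_dplpProb_div_le hσ hs' (fun v => (hbetween v).1) (fun v => (hbetween v).2) hu huC
  · have hbetween := le_and_le_add_one_of_eq_off (fun v hv => (hagree v hv).symm) h (by linarith)
    rw [← inv_div, log_inv, abs_neg]
    exact abs_log_dplpProb_div_le hσ hs (fun v => (hbetween v).1) (fun v => (hbetween v).2) hu huC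

/-- DPLP with sensitivity `Δ = 1`, when the two score functions differ at a
single node (by at most 1), is `Kσ·log 2`-differentially private. -/
theorem dplp_privacy_cn_jc {V : Type*} [Fintype V] [DecidableEq V]
    (σ : ℝ) (hσ : 0 ≤ σ)
    (C : Finset V) (hC : C.Nonempty)
    (s s' : V → ℝ)
    (hs : ∀ v, 0 ≤ s v) (hs' : ∀ v, 0 ≤ s' v)
    (v₀ : V) (hagree : ∀ v, v ≠ v₀ → s v = s' v) (hv₀ : |s v₀ - s' v₀| ≤ 1)
    (K : ℕ) (u : Fin K → V) (hu : Function.Injective u)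
    (huC : ∀ k, u k ∈ C) (hK : K ≤ C.card) :
    |Real.log
        ((∏ k : Fin K, (s (u k) + 2) ^ σ /
            ∑ w ∈ C \ Finset.image u (Finset.univ.filter (fun j => j < k)),
              (s w + 2) ^ σ) /
         (∏ k : Fin K, (s' (u k) + 2) ^ σ /
            ∑ w ∈ C \ Finset.image u (Finset.univ.filter (fun j => j < k)),
              (s' w + 2) ^ σ))|
      ≤ K * σ * Real.log 2 :=
  dplp_privacy_cn_jc_general σ hσ C s s' hs hs' v₀ hagree hv₀ K u hu huC
end

section
/- Let K ≥ 1 be a natural number and let d, e : {1,…,K} → ℝ be real sequences such that e is monotone nondecreasing (e_i ≤ e_j whenever i < j). Then (1/(2K)) · ∑_{1 ≤ i < j ≤ K} (d_i − d_j)² · 𝟙[d_i > d_j] ≤ ∑_{i=1}^{K} (d_i − e_i)². -/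
open Finset

/-- The ranking loss is bounded by the squared-distance surrogate loss. -/
theorem ranking_loss_le_surrogate (K : ℕ) (hK : 1 ≤ K)
    (d e : Fin K → ℝ) (he : ∀ i j : Fin K, i < j → e i ≤ e j) :
    (1 / (2 * (K : ℝ))) *
        ∑ i : Fin K, ∑ j ∈ Finset.univ.filter (fun j => i < j),
          (d i - d j) ^ 2 * (if d j < d i then (1 : ℝ) else 0)
      ≤ ∑ i : Fin K, (d i - e i) ^ 2 := by
  have hK0 : (0:ℝ) < K := by exact_mod_cast hK
  set g : Fin K → ℝ := fun i => (d i - e i) ^ 2 with hg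
  have hgnn : ∀ i, 0 ≤ g i := fun i => sq_nonneg _
  -- pointwise bound on each wrongly ordered pair
  have key : ∀ i j : Fin K, i < j →
      (d i - d j) ^ 2 * (if d j < d i then (1:ℝ) else 0) ≤ 2 * (g i + g j) := by
    intro i j hij
    have hee := he i j hij
    split_ifs with h
    · simp only [mul_one, hg]
      have h1 : d i - d j ≤ (d i - e i) - (d j - e j) := by linarith
      have h2 : (d i - d j) ^ 2 ≤ ((d i - e i) - (d j - e j)) ^ 2 := by
        apply sq_le_sq' <;> nlinarith
      nlinarith [sq_nonneg ((d i - e i) + (d j - e j))]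
    · simp only [mul_zero]
      positivity
  have hS : (∑ i : Fin K, ∑ j ∈ Finset.univ.filter (fun j => i < j),
          (d i - d j) ^ 2 * (if d j < d i then (1 : ℝ) else 0))
      ≤ ∑ i : Fin K, ∑ j ∈ Finset.univ.filter (fun j => i < j), 2 * (g i + g j) := by
    refine Finset.sum_le_sum fun i _ => Finset.sum_le_sum fun j hj => ?_
    exact key i j (by simpa using (Finset.mem_filter.mp hj).2)
  set c : Fin K → ℕ := fun i => (Finset.univ.filter (fun j => i < j)).card with hc
  set c' : Fin K → ℕ := fun i => (Finset.univ.filter (fun j => j < i)).card with hc'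
  have hswap : (∑ i : Fin K, ∑ j ∈ Finset.univ.filter (fun j => i < j), g j)
      = ∑ i : Fin K, (c' i : ℝ) * g i := by
    have : (∑ i : Fin K, ∑ j ∈ Finset.univ.filter (fun j => i < j), g j)
        = ∑ j : Fin K, ∑ _i ∈ Finset.univ.filter (fun i => i < j), g j :=
      Finset.sum_comm' (fun i j => by simp [and_comm])
    rw [this]
    simp [hc', Finset.sum_const, nsmul_eq_mul]
  have hcard : ∀ i : Fin K, (c i : ℝ) + (c' i : ℝ) ≤ (K : ℝ) := by
    intro i
    have hdisj : Disjoint (Finset.univ.filter (fun j : Fin K => i < j))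
        (Finset.univ.filter (fun j : Fin K => j < i)) := by
      rw [Finset.disjoint_left]
      intro a ha hb
      have h1 : i < a := by simpa using (Finset.mem_filter.mp ha).2
      have h2 : a < i := by simpa using (Finset.mem_filter.mp hb).2
      exact absurd (h1.trans h2) (lt_irrefl i)
    have hu := Finset.card_union_of_disjoint hdisj
    have hle : ((Finset.univ.filter (fun j : Fin K => i < j)) ∪
        (Finset.univ.filter (fun j : Fin K => j < i))).card ≤ K := by
      calc _ ≤ (Finset.univ : Finset (Fin K)).card := Finset.card_le_card (Finset.subset_univ _)
        _ = K := by simp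
    have : c i + c' i ≤ K := by simp only [hc, hc']; omega
    exact_mod_cast this
  have hbound : (∑ i : Fin K, ∑ j ∈ Finset.univ.filter (fun j => i < j), 2 * (g i + g j))
      ≤ 2 * (K : ℝ) * ∑ i : Fin K, g i := by
    have expand : (∑ i : Fin K, ∑ j ∈ Finset.univ.filter (fun j => i < j), 2 * (g i + g j))
        = 2 * ∑ i : Fin K, ((c i : ℝ) + (c' i : ℝ)) * g i := by
      have e1 : ∀ i : Fin K, (∑ j ∈ Finset.univ.filter (fun j => i < j), (g i + g j))
          = (c i : ℝ) * g i + ∑ j ∈ Finset.univ.filter (fun j => i < j), g j := by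
        intro i
        rw [Finset.sum_add_distrib, Finset.sum_const, nsmul_eq_mul, hc]
      calc (∑ i : Fin K, ∑ j ∈ Finset.univ.filter (fun j => i < j), 2 * (g i + g j))
          = 2 * ∑ i : Fin K, ∑ j ∈ Finset.univ.filter (fun j => i < j), (g i + g j) := by
            rw [Finset.mul_sum]; congr 1; funext i; rw [Finset.mul_sum]
        _ = 2 * (∑ i : Fin K, ((c i : ℝ) * g i)
              + ∑ i : Fin K, ∑ j ∈ Finset.univ.filter (fun j => i < j), g j) := by
            rw [← Finset.sum_add_distrib]; congr 1; exact Finset.sum_congr rfl fun i _ => e1 i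
        _ = 2 * (∑ i : Fin K, ((c i : ℝ) * g i) + ∑ i : Fin K, (c' i : ℝ) * g i) := by
            rw [hswap]
        _ = 2 * ∑ i : Fin K, ((c i : ℝ) + (c' i : ℝ)) * g i := by
            rw [← Finset.sum_add_distrib]
            congr 1; exact Finset.sum_congr rfl fun i _ => by ring
    rw [expand]
    have h1 : (∑ i : Fin K, ((c i : ℝ) + (c' i : ℝ)) * g i)
        ≤ ∑ i : Fin K, (K : ℝ) * g i :=
      Finset.sum_le_sum fun i _ => mul_le_mul_of_nonneg_right (hcard i) (hgnn i)
    rw [← Finset.mul_sum] at h1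
    nlinarith [h1]
  calc (1 / (2 * (K : ℝ))) *
        ∑ i : Fin K, ∑ j ∈ Finset.univ.filter (fun j => i < j),
          (d i - d j) ^ 2 * (if d j < d i then (1 : ℝ) else 0)
      ≤ (1 / (2 * (K : ℝ))) * (2 * (K : ℝ) * ∑ i : Fin K, g i) := by
        apply mul_le_mul_of_nonneg_left (hS.trans hbound)
        positivity
    _ = ∑ i : Fin K, g i := by field_simp
    _ = ∑ i : Fin K, (d i - e i) ^ 2 := by simp [hg]
end

section
/- Let G be a simple graph on a finite vertex set V, let a, b ∈ V with a ≠ b and a, b not adjacent in G, and let G' be the simple graph obtained from G by adding the edge {a,b}. Then for all vertices u, v ∈ V, | |N_{G'}(u) ∩ N_{G'}(v)| − |N_G(u) ∩ N_G(v)| | ≤ 1. -/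
open Finset

/-- Adding one edge changes the common-neighbor score of any pair by at most 1. -/
theorem common_neighbor_sensitivity {V : Type*} [Fintype V] [DecidableEq V]
    (G G' : SimpleGraph V) [DecidableRel G.Adj] [DecidableRel G'.Adj]
    (a b : V) (hab : a ≠ b) (hnadj : ¬ G.Adj a b)
    (hG' : ∀ x y, G'.Adj x y ↔ G.Adj x y ∨ (x = a ∧ y = b) ∨ (x = b ∧ y = a)) :
    ∀ u v : V,
      |(((G'.neighborFinset u ∩ G'.neighborFinset v).card : ℝ)) -
        (((G.neighborFinset u ∩ G.neighborFinset v).card : ℝ))| ≤ 1 := by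
  intro u v
  set S := G.neighborFinset u ∩ G.neighborFinset v with hS
  set S' := G'.neighborFinset u ∩ G'.neighborFinset v with hS'
  have hmem : ∀ w, w ∈ S ↔ G.Adj u w ∧ G.Adj v w := by
    intro w; simp [hS, SimpleGraph.mem_neighborFinset]
  have hmem' : ∀ w, w ∈ S' ↔ G'.Adj u w ∧ G'.Adj v w := by
    intro w; simp [hS', SimpleGraph.mem_neighborFinset]
  have hsub : S ⊆ S' := by
    intro w hw
    rw [hmem] at hw
    rw [hmem', hG', hG']
    exact ⟨Or.inl hw.1, Or.inl hw.2⟩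
  -- S' \ S ⊆ {a, b}
  have hdsub : S' \ S ⊆ {a, b} := by
    intro w hw
    rw [Finset.mem_sdiff, hmem, hmem'] at hw
    obtain ⟨⟨h1, h2⟩, h3⟩ := hw
    rw [hG'] at h1 h2
    simp only [Finset.mem_insert, Finset.mem_singleton]
    rcases h1 with h1 | ⟨_, rfl⟩ | ⟨_, rfl⟩
    · rcases h2 with h2 | ⟨_, rfl⟩ | ⟨_, rfl⟩
      · exact absurd ⟨h1, h2⟩ h3
      · exact Or.inr rfl
      · exact Or.inl rfl
    · exact Or.inr rfl
    · exact Or.inl rfl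
  -- not both a and b in S' \ S
  have hcard : (S' \ S).card ≤ 1 := by
    rw [Finset.card_le_one]
    intro x hx y hy
    by_contra hxy
    have hxab := hdsub hx
    have hyab := hdsub hy
    simp only [Finset.mem_insert, Finset.mem_singleton] at hxab hyab
    -- wlog x = a, y = b or x = b, y = a; derive the needed facts
    have key : a ∈ S' \ S → b ∈ S' \ S → False := by
      intro ha hb
      rw [Finset.mem_sdiff, hmem, hmem'] at ha hb
      obtain ⟨⟨ha1, ha2⟩, ha3⟩ := ha
      obtain ⟨⟨hb1, hb2⟩, hb3⟩ := hb
      rw [hG'] at ha1 ha2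
      -- from a ∈ S' \ S : u = b or v = b
      have hub : u = b ∨ v = b := by
        rcases ha1 with h1 | ⟨_, hba⟩ | ⟨hub, _⟩
        · rcases ha2 with h2 | ⟨_, hba⟩ | ⟨hvb, _⟩
          · exact absurd ⟨h1, h2⟩ ha3
          · exact absurd hba hab
          · exact Or.inr hvb
        · exact absurd hba hab
        · exact Or.inl hub
      rcases hub with rfl | rfl
      · exact G'.irrefl hb1
      · exact G'.irrefl hb2
    rcases hxab with rfl | rfl <;> rcases hyab with rfl | rfl
    · exact hxy rfl
    · exact key hx hy
    · exact key hy hx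
    · exact hxy rfl
  have hle : S'.card ≤ S.card + 1 := by
    have := Finset.card_sdiff_add_card_eq_card hsub
    omega
  have hge : S.card ≤ S'.card := Finset.card_le_card hsub
  rw [abs_sub_le_iff]
  constructor
  · have : (S'.card : ℝ) ≤ (S.card : ℝ) + 1 := by exact_mod_cast hle
    linarith
  · have : (S.card : ℝ) ≤ (S'.card : ℝ) := by exact_mod_cast hge
    linarith
end

section
/- Let G be a simple graph on a finite vertex set V in which every vertex has degree at least 2, let a, b ∈ V with a ≠ b and a, b not adjacent in G, and let G' be the simple graph obtained from G by adding the edge {a,b}. Define s_AA^H(u,v) = ∑_{w ∈ N_H(u) ∩ N_H(v)} 1/log(deg_H(w)) for a graph H. Then for all vertices u, v ∈ V, |s_AA^{G'}(u,v) − s_AA^G(u,v)| ≤ 1/log 2. -/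
/-!
Adding the edge `ab` changes only the neighbourhoods of `a` and `b`, and raises their degrees by
one. If `u` or `v` is an endpoint, the common neighbourhood gains at most the other endpoint, of
weight at most `1 / log 2`, while the old common neighbours keep their degrees. Otherwise the
common neighbourhood is unchanged and only the weights of `a` and `b` move, each by at most
`(1 / n) / (log n * log (n + 1)) ≤ 1 / (2 * log 2)` where `n ≥ 2` is the old degree.
-/

open Finset

namespace Real

lemma abs_one_div_log_le_one_div_log_two {x : ℝ} (hx : 2 ≤ x) :
    |1 / log x| ≤ 1 / log 2 := by
  have hlog2 : 0 < log 2 := log_pos one_lt_two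
  rw [abs_of_nonneg (one_div_nonneg.2 (log_nonneg (by linarith)))]
  exact one_div_le_one_div_of_le hlog2 (log_le_log two_pos hx)

lemma abs_one_div_log_add_one_sub_le {x : ℝ} (hx : 2 ≤ x) :
    |1 / log (x + 1) - 1 / log x| ≤ 1 / (2 * log 2) := by
  have hx0 : 0 < x := by linarith
  have hlog2 : 0 < log 2 := log_pos one_lt_two
  have hlogx : log 2 ≤ log x := log_le_log two_pos hx
  have hlog_mono : log x ≤ log (x + 1) := log_le_log hx0 (by linarith)
  have hlog_succ : 1 ≤ log (x + 1) := by
    rw [le_log_iff_exp_le (by linarith)]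
    linarith [exp_one_lt_d9]
  -- `log (1 + 1/x) ≤ 1/x`
  have hgap : log (x + 1) - log x ≤ 1 / 2 := by
    have h := log_le_sub_one_of_pos (div_pos (by linarith : 0 < x + 1) hx0)
    rw [log_div (by linarith) hx0.ne', add_div, div_self hx0.ne'] at h
    have : 1 / x ≤ 1 / 2 := one_div_le_one_div_of_le two_pos hx
    linarith
  rw [abs_sub_comm,
    abs_of_nonneg (sub_nonneg.2 (one_div_le_one_div_of_le (by linarith) hlog_mono)),
    div_sub_div _ _ (by linarith) (by linarith), one_mul, mul_one]
  calc (log (x + 1) - log x) / (log x * log (x + 1))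
      ≤ (1 / 2) / (log 2 * 1) := by gcongr; linarith
    _ = 1 / (2 * log 2) := by ring

end Real

theorem Finset.abs_sum_sub_sum_le_sum_abs_sub {ι : Type*} [DecidableEq ι] (s t : Finset ι)
    {f g : ι → ℝ} (h : ∀ i ∈ s, i ∉ t → f i = g i) :
    |∑ i ∈ s, f i - ∑ i ∈ s, g i| ≤ ∑ i ∈ t, |f i - g i| := by
  rw [← sum_sub_distrib]
  calc |∑ i ∈ s, (f i - g i)| ≤ ∑ i ∈ s, |f i - g i| := abs_sum_le_sum_abs _ _
    _ = ∑ i ∈ s ∩ t, |f i - g i| := by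
      refine (sum_subset inter_subset_left fun i hs hst => ?_).symm
      rw [h i hs fun ht => hst (mem_inter.2 ⟨hs, ht⟩), sub_self, abs_zero]
    _ ≤ ∑ i ∈ t, |f i - g i| :=
      sum_le_sum_of_subset_of_nonneg inter_subset_right fun _ _ _ => abs_nonneg _

theorem Finset.abs_sum_sub_sum_le_of_subset_insert {ι : Type*} [DecidableEq ι] {s t : Finset ι}
    {f g : ι → ℝ} {c : ι} (hst : s ⊆ t) (hts : t ⊆ insert c s) (h : ∀ i ∈ s, f i = g i) :
    |∑ i ∈ t, f i - ∑ i ∈ s, g i| ≤ |f c| := by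
  rw [← sum_congr rfl h, ← sum_sdiff hst, add_sub_cancel_right]
  have hdiff : t \ s ⊆ {c} :=
    sdiff_le_iff'.2 (by rwa [sup_eq_union, ← insert_eq])
  rcases subset_singleton_iff.1 hdiff with hempty | hsingle
  · simp [hempty]
  · simp [hsingle]

namespace SimpleGraph

variable {V : Type*}

def IsEdgeAddition (G G' : SimpleGraph V) (a b : V) : Prop :=
  ∀ x y, G'.Adj x y ↔ G.Adj x y ∨ (x = a ∧ y = b) ∨ (x = b ∧ y = a)

noncomputable def adamicAdar [Fintype V] [DecidableEq V] (G : SimpleGraph V) [DecidableRel G.Adj]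
    (u v : V) : ℝ :=
  ∑ w ∈ G.neighborFinset u ∩ G.neighborFinset v, 1 / Real.log (G.degree w)

lemma adamicAdar_comm [Fintype V] [DecidableEq V] (G : SimpleGraph V) [DecidableRel G.Adj]
    (u v : V) : G.adamicAdar u v = G.adamicAdar v u := by
  rw [adamicAdar, adamicAdar, inter_comm]

namespace IsEdgeAddition

variable {G G' : SimpleGraph V} {a b : V}

lemma swap (h : G.IsEdgeAddition G' a b) : G.IsEdgeAddition G' b a :=
  fun x y => (h x y).trans (or_congr_right or_comm)

lemma le (h : G.IsEdgeAddition G' a b) : G ≤ G' :=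
  fun x y hxy => (h x y).2 (Or.inl hxy)

lemma adj_iff_of_ne (h : G.IsEdgeAddition G' a b) {x y : V} (hxa : x ≠ a) (hxb : x ≠ b) :
    G'.Adj x y ↔ G.Adj x y := by
  simp [h x y, hxa, hxb]

variable [Fintype V] [DecidableRel G.Adj] [DecidableRel G'.Adj]

lemma neighborFinset_eq_of_ne (h : G.IsEdgeAddition G' a b) {x : V} (hxa : x ≠ a)
    (hxb : x ≠ b) : G'.neighborFinset x = G.neighborFinset x := by
  ext y
  simp only [mem_neighborFinset, h.adj_iff_of_ne hxa hxb]

lemma neighborFinset_subset (h : G.IsEdgeAddition G' a b) (x : V) :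
    G.neighborFinset x ⊆ G'.neighborFinset x := fun _ hy =>
  (mem_neighborFinset _ _ _).2 (h.le ((mem_neighborFinset _ _ _).1 hy))

lemma degree_eq_of_ne (h : G.IsEdgeAddition G' a b) {x : V} (hxa : x ≠ a) (hxb : x ≠ b) :
    G'.degree x = G.degree x := by
  rw [← card_neighborFinset_eq_degree, ← card_neighborFinset_eq_degree,
    h.neighborFinset_eq_of_ne hxa hxb]

lemma neighborFinset_left [DecidableEq V] (h : G.IsEdgeAddition G' a b) :
    G'.neighborFinset a = insert b (G.neighborFinset a) := by
  ext y
  simp only [mem_neighborFinset, mem_insert, h a y]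
  grind

lemma degree_left (h : G.IsEdgeAddition G' a b) (hnadj : ¬ G.Adj a b) :
    G'.degree a = G.degree a + 1 := by
  classical
  rw [← card_neighborFinset_eq_degree, ← card_neighborFinset_eq_degree, h.neighborFinset_left,
    card_insert_of_notMem (by simpa using hnadj)]

lemma abs_one_div_log_degree_left_sub_le (h : G.IsEdgeAddition G' a b) (hnadj : ¬ G.Adj a b)
    (hdeg : 2 ≤ G.degree a) :
    |1 / Real.log (G'.degree a) - 1 / Real.log (G.degree a)| ≤ 1 / (2 * Real.log 2) := by
  rw [h.degree_left hnadj, Nat.cast_succ]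
  exact Real.abs_one_div_log_add_one_sub_le (by exact_mod_cast hdeg)

variable [DecidableEq V]

lemma abs_adamicAdar_left_sub_le (h : G.IsEdgeAddition G' a b) (hnadj : ¬ G.Adj a b)
    (hdeg : ∀ w, 2 ≤ G.degree w) (v : V) :
    |G'.adamicAdar a v - G.adamicAdar a v| ≤ 1 / Real.log 2 := by
  have hsub :
      G.neighborFinset a ∩ G.neighborFinset v ⊆ G'.neighborFinset a ∩ G'.neighborFinset v :=
    inter_subset_inter (h.neighborFinset_subset a) (h.neighborFinset_subset v)
  have hne : ∀ w ∈ G.neighborFinset a, w ≠ a ∧ w ≠ b := fun w hw => by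
    rw [mem_neighborFinset] at hw
    exact ⟨hw.ne', fun hwb => hnadj (hwb ▸ hw)⟩
  have hins : G'.neighborFinset a ∩ G'.neighborFinset v ⊆
      insert b (G.neighborFinset a ∩ G.neighborFinset v) := by
    intro w hw
    rw [mem_inter, h.neighborFinset_left, mem_insert] at hw
    obtain ⟨rfl | hwa, hwv⟩ := hw
    · exact mem_insert_self _ _
    · rw [mem_neighborFinset, adj_comm, h.adj_iff_of_ne (hne w hwa).1 (hne w hwa).2,
        adj_comm, ← mem_neighborFinset] at hwv
      exact mem_insert_of_mem (mem_inter.2 ⟨hwa, hwv⟩)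
  calc |G'.adamicAdar a v - G.adamicAdar a v| ≤ |1 / Real.log (G'.degree b)| :=
        abs_sum_sub_sum_le_of_subset_insert hsub hins fun w hw => by
          rw [h.degree_eq_of_ne (hne w (mem_inter.1 hw).1).1 (hne w (mem_inter.1 hw).1).2]
    _ ≤ 1 / Real.log 2 := Real.abs_one_div_log_le_one_div_log_two
          (by exact_mod_cast (hdeg b).trans (degree_le_of_le h.le))

lemma abs_adamicAdar_sub_le_of_ne (h : G.IsEdgeAddition G' a b) (hab : a ≠ b)
    (hnadj : ¬ G.Adj a b) (hdeg : ∀ w, 2 ≤ G.degree w) {u v : V} (hua : u ≠ a) (hub : u ≠ b)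
    (hva : v ≠ a) (hvb : v ≠ b) :
    |G'.adamicAdar u v - G.adamicAdar u v| ≤ 1 / Real.log 2 := by
  rw [adamicAdar, adamicAdar, h.neighborFinset_eq_of_ne hua hub,
    h.neighborFinset_eq_of_ne hva hvb]
  calc _ ≤ ∑ w ∈ {a, b}, |1 / Real.log (G'.degree w) - 1 / Real.log (G.degree w)| :=
        abs_sum_sub_sum_le_sum_abs_sub _ _ fun w _ hw => by
          rw [mem_insert, mem_singleton, not_or] at hw
          rw [h.degree_eq_of_ne hw.1 hw.2]
    _ = |1 / Real.log (G'.degree a) - 1 / Real.log (G.degree a)| +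
          |1 / Real.log (G'.degree b) - 1 / Real.log (G.degree b)| := sum_pair hab
    _ ≤ 1 / (2 * Real.log 2) + 1 / (2 * Real.log 2) :=
        add_le_add (h.abs_one_div_log_degree_left_sub_le hnadj (hdeg a))
          (h.swap.abs_one_div_log_degree_left_sub_le (fun hba => hnadj hba.symm) (hdeg b))
    _ = 1 / Real.log 2 := by ring

end IsEdgeAddition

end SimpleGraph

/-- Adding one edge changes the Adamic–Adar score of any pair by at most `1/log 2`,
provided every vertex has degree at least 2. -/
theorem adamic_adar_sensitivity {V : Type*} [Fintype V] [DecidableEq V]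
    (G G' : SimpleGraph V) [DecidableRel G.Adj] [DecidableRel G'.Adj]
    (hdeg : ∀ w : V, 2 ≤ G.degree w)
    (a b : V) (hab : a ≠ b) (hnadj : ¬ G.Adj a b)
    (hG' : ∀ x y, G'.Adj x y ↔ G.Adj x y ∨ (x = a ∧ y = b) ∨ (x = b ∧ y = a)) :
    ∀ u v : V,
      |(∑ w ∈ G'.neighborFinset u ∩ G'.neighborFinset v,
          1 / Real.log (G'.degree w)) -
        (∑ w ∈ G.neighborFinset u ∩ G.neighborFinset v,
          1 / Real.log (G.degree w))| ≤ 1 / Real.log 2 := by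
  intro u v
  change |G'.adamicAdar u v - G.adamicAdar u v| ≤ _
  have h : G.IsEdgeAddition G' a b := hG'
  have hnadj' : ¬ G.Adj b a := fun hba => hnadj hba.symm
  have hendpoint : ∀ x y, x = a ∨ x = b →
      |G'.adamicAdar x y - G.adamicAdar x y| ≤ 1 / Real.log 2 := by
    rintro x y (rfl | rfl)
    · exact h.abs_adamicAdar_left_sub_le hnadj hdeg y
    · exact h.swap.abs_adamicAdar_left_sub_le hnadj' hdeg y
  by_cases hu : u = a ∨ u = b
  · exact hendpoint u v hu
  by_cases hv : v = a ∨ v = b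
  · rw [G'.adamicAdar_comm, G.adamicAdar_comm]
    exact hendpoint v u hv
  rw [not_or] at hu hv
  exact h.abs_adamicAdar_sub_le_of_ne hab hnadj hdeg hu.1 hu.2 hv.1 hv.2
end

section
/- Let S be a nonempty finite set, let Δ ≥ 0 and σ ≥ 0 be real numbers, and let ψ, δ : S → ℝ be functions with ψ(w) ≥ 0 and |δ(w)| ≤ Δ for every w ∈ S. Then (1+Δ)^{−σ} ≤ (∑_{w ∈ S} (ψ(w)+δ(w)+Δ+1)^σ) / (∑_{w ∈ S} (ψ(w)+Δ+1)^σ) ≤ (1+Δ)^σ. -/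
open Finset

/-- Normalizing-sum ratio bound for DPLP: perturbing every score by at most `Δ`
changes the normalizing sum by a multiplicative factor of at most `(1+Δ)^{±σ}`. -/
theorem normalizing_sum_ratio_bound {α : Type*} (S : Finset α) (hS : S.Nonempty)
    (Δ σ : ℝ) (hΔ : 0 ≤ Δ) (hσ : 0 ≤ σ)
    (ψ δ : α → ℝ) (hψ : ∀ w ∈ S, 0 ≤ ψ w) (hδ : ∀ w ∈ S, |δ w| ≤ Δ) :
    (1 + Δ) ^ (-σ) ≤
        (∑ w ∈ S, (ψ w + δ w + Δ + 1) ^ σ) / (∑ w ∈ S, (ψ w + Δ + 1) ^ σ) ∧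
      (∑ w ∈ S, (ψ w + δ w + Δ + 1) ^ σ) / (∑ w ∈ S, (ψ w + Δ + 1) ^ σ) ≤
        (1 + Δ) ^ σ := by
  have h1Δ : (0:ℝ) < 1 + Δ := by linarith
  have hDpos : 0 < ∑ w ∈ S, (ψ w + Δ + 1) ^ σ := by
    apply Finset.sum_pos (fun w hw => ?_) hS
    exact Real.rpow_pos_of_pos (by have := hψ w hw; linarith) σ
  have hbase : ∀ w ∈ S, 0 < ψ w + δ w + Δ + 1 := fun w hw => by
    have h1 := hψ w hw
    have h2 := (abs_le.mp (hδ w hw)).1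
    linarith
  have hupper : (∑ w ∈ S, (ψ w + δ w + Δ + 1) ^ σ) ≤
      (1 + Δ) ^ σ * ∑ w ∈ S, (ψ w + Δ + 1) ^ σ := by
    rw [Finset.mul_sum]
    apply Finset.sum_le_sum
    intro w hw
    have h1 := hψ w hw
    have h2 := (abs_le.mp (hδ w hw)).2
    rw [← Real.mul_rpow h1Δ.le (by linarith : (0:ℝ) ≤ ψ w + Δ + 1)]
    apply Real.rpow_le_rpow (hbase w hw).le _ hσ
    nlinarith
  have hlower : (1 + Δ) ^ (-σ) * (∑ w ∈ S, (ψ w + Δ + 1) ^ σ) ≤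
      ∑ w ∈ S, (ψ w + δ w + Δ + 1) ^ σ := by
    rw [Finset.mul_sum]
    apply Finset.sum_le_sum
    intro w hw
    have h1 := hψ w hw
    have h2 := (abs_le.mp (hδ w hw)).1
    rw [Real.rpow_neg h1Δ.le, ← Real.inv_rpow h1Δ.le,
      ← Real.mul_rpow (by positivity) (by linarith : (0:ℝ) ≤ ψ w + Δ + 1)]
    apply Real.rpow_le_rpow (by positivity) _ hσ
    rw [inv_mul_le_iff₀ h1Δ]
    nlinarith
  constructor
  · rw [le_div_iff₀ hDpos]; exact hlower
  · rw [div_le_iff₀ hDpos]; exact hupper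
end

section
/- Let I be a nonempty finite set with n = |I|, let s : I → ℝ be nonnegative, let Δ ≥ 0, σ ≥ 0 and a ≥ 0 be real numbers, and let b ≥ 0 be such that s(w) ≤ b for every w ∈ I with s(w) < a. Suppose there exists w₀ ∈ I with s(w₀) ≥ a. Then (∑_{w ∈ I} max(a − s(w), 0) · (s(w)+Δ+1)^σ) / (∑_{v ∈ I} (s(v)+Δ+1)^σ) ≤ n·a·(b+Δ+1)^σ / ((a+Δ+1)^σ + (n−1)·(Δ+1)^σ). -/
open Finset

/-- Single-step expected score-loss bound for the DPLP sampler. -/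
theorem dplp_expected_loss_step {α : Type*} (I : Finset α) (hI : I.Nonempty)
    (s : α → ℝ) (hs : ∀ w ∈ I, 0 ≤ s w)
    (Δ σ a b : ℝ) (hΔ : 0 ≤ Δ) (hσ : 0 ≤ σ) (ha : 0 ≤ a) (hb : 0 ≤ b)
    (hbs : ∀ w ∈ I, s w < a → s w ≤ b)
    (hw₀ : ∃ w₀ ∈ I, a ≤ s w₀) :
    (∑ w ∈ I, max (a - s w) 0 * (s w + Δ + 1) ^ σ) /
        (∑ v ∈ I, (s v + Δ + 1) ^ σ)
      ≤ (I.card : ℝ) * a * (b + Δ + 1) ^ σ /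
          ((a + Δ + 1) ^ σ + ((I.card : ℝ) - 1) * (Δ + 1) ^ σ) := by
  classical
  obtain ⟨w₀, hw₀I, hw₀a⟩ := hw₀
  have h1 : (0:ℝ) < Δ + 1 := by linarith
  have hcard : 1 ≤ I.card := Finset.card_pos.mpr hI
  have hden_lb : (a + Δ + 1) ^ σ + ((I.card : ℝ) - 1) * (Δ + 1) ^ σ ≤
      ∑ v ∈ I, (s v + Δ + 1) ^ σ := by
    rw [← Finset.add_sum_erase I _ hw₀I]
    have h2 : (a + Δ + 1) ^ σ ≤ (s w₀ + Δ + 1) ^ σ :=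
      Real.rpow_le_rpow (by linarith) (by linarith) hσ
    have h3 : ((I.card : ℝ) - 1) * (Δ + 1) ^ σ ≤
        ∑ v ∈ I.erase w₀, (s v + Δ + 1) ^ σ := by
      have h4 : ∑ _v ∈ I.erase w₀, (Δ + 1) ^ σ ≤
          ∑ v ∈ I.erase w₀, (s v + Δ + 1) ^ σ := by
        apply Finset.sum_le_sum
        intro v hv
        have := hs v (Finset.mem_of_mem_erase hv)
        exact Real.rpow_le_rpow (le_of_lt h1) (by linarith) hσ
      rw [Finset.sum_const, nsmul_eq_mul, Finset.card_erase_of_mem hw₀I,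
        Nat.cast_sub hcard, Nat.cast_one] at h4
      exact h4
    linarith
  have hden_pos : (0:ℝ) < (a + Δ + 1) ^ σ + ((I.card : ℝ) - 1) * (Δ + 1) ^ σ := by
    have h5 := Real.rpow_pos_of_pos (show (0:ℝ) < a + Δ + 1 by linarith) σ
    have h6 := Real.rpow_pos_of_pos h1 σ
    have h7 : (0:ℝ) ≤ (I.card : ℝ) - 1 := by
      have : (1:ℝ) ≤ (I.card : ℝ) := by exact_mod_cast hcard
      linarith
    nlinarith
  have hnum : ∑ w ∈ I, max (a - s w) 0 * (s w + Δ + 1) ^ σ ≤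
      (I.card : ℝ) * a * (b + Δ + 1) ^ σ := by
    have step : ∀ w ∈ I, max (a - s w) 0 * (s w + Δ + 1) ^ σ ≤
        a * (b + Δ + 1) ^ σ := by
      intro w hw
      rcases le_or_gt a (s w) with h | h
      · rw [max_eq_right (by linarith), zero_mul]
        positivity
      · have hwb := hbs w hw h
        have hsw := hs w hw
        rw [max_eq_left (by linarith)]
        exact mul_le_mul (by linarith)
          (Real.rpow_le_rpow (by linarith) (by linarith) hσ) (by positivity) ha
    calc ∑ w ∈ I, max (a - s w) 0 * (s w + Δ + 1) ^ σ
        ≤ ∑ _w ∈ I, a * (b + Δ + 1) ^ σ := Finset.sum_le_sum step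
      _ = (I.card : ℝ) * a * (b + Δ + 1) ^ σ := by
          rw [Finset.sum_const, nsmul_eq_mul, mul_assoc]
  exact div_le_div₀ (by positivity) hnum hden_pos hden_lb
end
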